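/- arXiv:2112.00960 — 2 statements merged into one kernel-verified Lean document; each statement's English description precedes it below -/
import Mathlib

section
/- Let n ≥ 1 and σ ∈ (0,1). Let u : ℝ^n → [0,∞) be measurable, let R > 0 and let x ∈ ℝ^n with |x| < R. Then (R/(R+|x|))^{n+2σ} ∫_{B_R^c} u(y)/|y|^{n+2σ} dy ≤ ∫_{B_R^c} u(y)/|x−y|^{n+2σ} dy ≤ (R/(R−|x|))^{n+2σ} ∫_{B_R^c} u(y)/|y|^{n+2σ} dy, where the integrals are allowed to take the value +∞. -/
open MeasureTheory Metric Filter

theorem tail_integral_comparison (n : ℕ) (hn : 1 ≤ n) (σ : ℝ) (hσ : σ ∈ Set.Ioo (0 : ℝ) 1)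
    (u : EuclideanSpace ℝ (Fin n) → ℝ) (hmeas : Measurable u) (hnonneg : ∀ y, 0 ≤ u y)
    (R : ℝ) (hR : 0 < R) (x : EuclideanSpace ℝ (Fin n)) (hx : ‖x‖ < R) :
    (ENNReal.ofReal ((R / (R + ‖x‖)) ^ ((n : ℝ) + 2 * σ)) *
        ∫⁻ y in {y : EuclideanSpace ℝ (Fin n) | R ≤ ‖y‖},
          ENNReal.ofReal (u y / ‖y‖ ^ ((n : ℝ) + 2 * σ)) ≤
      ∫⁻ y in {y : EuclideanSpace ℝ (Fin n) | R ≤ ‖y‖},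
        ENNReal.ofReal (u y / dist x y ^ ((n : ℝ) + 2 * σ))) ∧
    (∫⁻ y in {y : EuclideanSpace ℝ (Fin n) | R ≤ ‖y‖},
        ENNReal.ofReal (u y / dist x y ^ ((n : ℝ) + 2 * σ)) ≤
      ENNReal.ofReal ((R / (R - ‖x‖)) ^ ((n : ℝ) + 2 * σ)) *
        ∫⁻ y in {y : EuclideanSpace ℝ (Fin n) | R ≤ ‖y‖},
          ENNReal.ofReal (u y / ‖y‖ ^ ((n : ℝ) + 2 * σ))) := by
  set p : ℝ := (n : ℝ) + 2 * σ with hp_def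
  have hp : 0 < p := by
    have : (1 : ℝ) ≤ (n : ℝ) := by exact_mod_cast hn
    nlinarith [hσ.1]
  have hsMeas : MeasurableSet {y : EuclideanSpace ℝ (Fin n) | R ≤ ‖y‖} :=
    (isClosed_le continuous_const continuous_norm).measurableSet
  have hx0 : 0 ≤ ‖x‖ := norm_nonneg x
  -- pointwise facts for y in the set
  have key : ∀ y : EuclideanSpace ℝ (Fin n), R ≤ ‖y‖ →
      (R - ‖x‖) * ‖y‖ / R ≤ dist x y ∧ dist x y ≤ (R + ‖x‖) * ‖y‖ / R := by
    intro y hy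
    have hdist1 : ‖y‖ - ‖x‖ ≤ dist x y := by
      have := norm_sub_norm_le y x
      rw [dist_comm, dist_eq_norm]
      linarith [this]
    have hdist2 : dist x y ≤ ‖x‖ + ‖y‖ := by
      rw [dist_eq_norm]; exact norm_sub_le x y
    constructor
    · rw [div_le_iff₀ hR]
      nlinarith
    · rw [le_div_iff₀ hR]
      nlinarith
  constructor
  · -- lower bound
    rw [← lintegral_const_mul' _ _ ENNReal.ofReal_ne_top]
    refine setLIntegral_mono' hsMeas fun y hy => ?_
    have hy : R ≤ ‖y‖ := hy
    have hyp : 0 < ‖y‖ := lt_of_lt_of_le hR hy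
    have hd : 0 < dist x y := by
      have := (key y hy).1
      have h1 : 0 < (R - ‖x‖) * ‖y‖ / R := by
        have hRx1 : 0 < R - ‖x‖ := by linarith
        positivity
      linarith
    have hRx0 : 0 < R + ‖x‖ := by linarith
    rw [← ENNReal.ofReal_mul (Real.rpow_nonneg (div_nonneg hR.le hRx0.le) p)]
    apply ENNReal.ofReal_le_ofReal
    have hub : dist x y ≤ (R + ‖x‖) * ‖y‖ / R := (key y hy).2
    have h1 : dist x y ^ p ≤ ((R + ‖x‖) * ‖y‖ / R) ^ p :=
      Real.rpow_le_rpow dist_nonneg hub hp.le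
    have hRx : 0 < R + ‖x‖ := by linarith
    calc (R / (R + ‖x‖)) ^ p * (u y / ‖y‖ ^ p)
        = u y / (((R + ‖x‖) * ‖y‖ / R) ^ p) := by
          rw [Real.div_rpow hR.le hRx.le, Real.div_rpow (by positivity) hR.le,
            Real.mul_rpow hRx.le hyp.le]
          field_simp
      _ ≤ u y / dist x y ^ p := by
          apply div_le_div_of_nonneg_left (hnonneg y) (by positivity) h1
  · -- upper bound
    rw [← lintegral_const_mul' _ _ ENNReal.ofReal_ne_top]
    refine setLIntegral_mono' hsMeas fun y hy => ?_
    have hy : R ≤ ‖y‖ := hy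
    have hyp : 0 < ‖y‖ := lt_of_lt_of_le hR hy
    have hlb : (R - ‖x‖) * ‖y‖ / R ≤ dist x y := (key y hy).1
    have hlbpos : 0 < (R - ‖x‖) * ‖y‖ / R := by
      have : 0 < R - ‖x‖ := by linarith
      positivity
    have hd : 0 < dist x y := lt_of_lt_of_le hlbpos hlb
    have hRx : 0 < R - ‖x‖ := by linarith
    rw [← ENNReal.ofReal_mul (Real.rpow_nonneg (div_nonneg hR.le hRx.le) p)]
    apply ENNReal.ofReal_le_ofReal
    have h1 : ((R - ‖x‖) * ‖y‖ / R) ^ p ≤ dist x y ^ p :=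
      Real.rpow_le_rpow hlbpos.le hlb hp.le
    calc u y / dist x y ^ p
        ≤ u y / (((R - ‖x‖) * ‖y‖ / R) ^ p) :=
          div_le_div_of_nonneg_left (hnonneg y) (by positivity) h1
      _ = (R / (R - ‖x‖)) ^ p * (u y / ‖y‖ ^ p) := by
          rw [Real.div_rpow hR.le hRx.le, Real.div_rpow (by positivity) hR.le,
            Real.mul_rpow hRx.le hyp.le]
          field_simp
end

section
/- Let n ≥ 1 and σ ∈ (0,1). For each integer j ≥ 1 set R_j = j^{1/(2σ)} and define V_j : ℝ^n → ℝ by V_j(y) = 1 for y ∈ B_{3R_j} and V_j(y) = 1 + j for y ∈ B_{3R_j}^c. Then V_j converges to the constant function 1 in C²_loc(ℝ^n), and for every x ∈ ℝ^n the fractional Laplacian (-Δ)^σ V_j(x) exists for all j large enough (namely whenever |x| < 3R_j) and lim_{j→∞} (-Δ)^σ V_j(x) = −c_{n,σ} |𝕊^{n−1}| / (2σ · 3^{2σ}), where |𝕊^{n−1}| is the surface measure of the unit sphere in ℝ^n. -/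
open MeasureTheory Metric Filter

noncomputable section

def fracLapConst (n : ℕ) (σ : ℝ) : ℝ :=
  2 ^ (2 * σ) * σ * Real.Gamma ((n + 2 * σ) / 2) /
    (Real.pi ^ ((n : ℝ) / 2) * Real.Gamma (1 - σ))

def HasFracLap (n : ℕ) (σ : ℝ) (u : EuclideanSpace ℝ (Fin n) → ℝ)
    (x : EuclideanSpace ℝ (Fin n)) (L : ℝ) : Prop :=
  Filter.Tendsto
    (fun ε : ℝ => fracLapConst n σ *
      ∫ y in {y : EuclideanSpace ℝ (Fin n) | ε < dist x y},
        (u x - u y) / dist x y ^ ((n : ℝ) + 2 * σ))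
    (nhdsWithin 0 (Set.Ioi 0)) (nhds L)

def sphereSurface (n : ℕ) : ℝ :=
  n * (volume (Metric.ball (0 : EuclideanSpace ℝ (Fin n)) 1)).toReal

/-!
Near a point `x` with `|x| < 3 R_j`, `V_j` is constant, so once `ε < 3 R_j - |x|` the truncated
integral no longer depends on `ε`: `(-Δ)^σ V_j(x) = -c_{n,σ} j ∫_{B_{3R_j}^c} |y - x|^{-n-2σ} dy`.
Translating by `x`, the domain of this integral lies between the complements of the balls of radii
`3 R_j ± |x|` about the origin, and in polar coordinates
`∫_{B_ρ^c} |z|^{-n-s} dz = |𝕊^{n-1}| ρ^{-s} / s`.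
Since `j = R_j^{2σ}`, both bounds times `j` tend to `|𝕊^{n-1}| / (2σ 3^{2σ})`.
The `C²_loc` convergence is immediate: on any ball, `V_j = 1` for `j` large.
-/

open Set

lemma tendstoUniformlyOn_iteratedFDeriv_of_eventually_eqOn {𝕜 E F ι : Type*}
    [NontriviallyNormedField 𝕜] [NormedAddCommGroup E] [NormedSpace 𝕜 E]
    [NormedAddCommGroup F] [NormedSpace 𝕜 F] {f : ι → E → F} {g : E → F} {l : Filter ι}
    {U K : Set E} (hU : IsOpen U) (hKU : K ⊆ U) (h : ∀ᶠ i in l, EqOn (f i) g U) (m : ℕ) :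
    TendstoUniformlyOn (fun i => iteratedFDeriv 𝕜 m (f i)) (iteratedFDeriv 𝕜 m g) l K := by
  intro u hu
  filter_upwards [h] with i hi y hy
  rw [((hi.eventuallyEq_of_mem (hU.mem_nhds (hKU hy))).iteratedFDeriv 𝕜 m).self_of_nhds]
  exact refl_mem_uniformity hu

lemma tendsto_rpow_mul_mul_add_rpow_neg {α : Type*} {l : Filter α} {R : α → ℝ}
    (hR : Tendsto R l atTop) {c : ℝ} (hc : 0 < c) (a s : ℝ) :
    Tendsto (fun i => R i ^ s * (c * R i + a) ^ (-s)) l (nhds (c ^ (-s))) := by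
  have hratio : Tendsto (fun i => c + a / R i) l (nhds c) := by
    simpa using tendsto_const_nhds.add (tendsto_const_nhds.div_atTop hR)
  refine (hratio.rpow_const (.inl hc.ne')).congr' ?_
  filter_upwards [hR.eventually_gt_atTop 0, hR.eventually_gt_atTop (-a / c)] with i hR0 hRa
  have hpos : 0 < c * R i + a := by
    rw [div_lt_iff₀ hc] at hRa
    linarith
  rw [show c + a / R i = (c * R i + a) / R i by field_simp,
    Real.div_rpow hpos.le hR0.le, Real.rpow_neg hR0.le]
  field_simp

section RadialTail

variable {E : Type*} [NormedAddCommGroup E]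

lemma compl_ball_zero_eq_empty [Subsingleton E] {ρ : ℝ} (hρ : 0 < ρ) : (ball (0 : E) ρ)ᶜ = ∅ := by
  rw [compl_empty_iff]
  exact eq_univ_of_forall fun z => by simpa [Subsingleton.elim z 0]

lemma indicator_compl_ball_zero_comp_norm (ρ : ℝ) (g : ℝ → ℝ) :
    (ball (0 : E) ρ)ᶜ.indicator (fun z => g ‖z‖) = fun z => (Ici ρ).indicator g ‖z‖ := by
  ext z
  simp [indicator, not_lt]

variable [MeasurableSpace E] [BorelSpace E] (μ : Measure E)

lemma setIntegral_compl_ball_zero_norm_sub [μ.IsAddRightInvariant] (g : ℝ → ℝ) (x : E)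
    (ρ : ℝ) : ∫ y in (ball 0 ρ)ᶜ, g ‖y - x‖ ∂μ = ∫ z in (ball (-x) ρ)ᶜ, g ‖z‖ ∂μ := by
  have h := (measurePreserving_add_right μ x).setIntegral_preimage_emb
    (measurableEmbedding_addRight x) (fun y => g ‖y - x‖) (ball 0 ρ)ᶜ
  simp only [preimage_compl, preimage_add_right_ball, zero_sub, add_sub_cancel_right] at h
  exact h.symm

lemma pow_smul_indicator_Ici_rpow {d : ℕ} (hd : 1 ≤ d) (s ρ : ℝ) {y : ℝ} (hy : 0 < y) :
    y ^ (d - 1) • (Ici ρ).indicator (· ^ (-(d + s))) y = (Ici ρ).indicator (· ^ (-s - 1)) y := by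
  by_cases hyρ : y ∈ Ici ρ
  · rw [indicator_of_mem hyρ, indicator_of_mem hyρ, smul_eq_mul, ← Real.rpow_natCast,
      ← Real.rpow_add hy, Nat.cast_sub hd, Nat.cast_one]
    ring_nf
  · simp [indicator_of_notMem hyρ]

variable [NormedSpace ℝ E] [FiniteDimensional ℝ E] [μ.IsAddHaarMeasure]

lemma integrableOn_compl_ball_norm_rpow_neg {s ρ : ℝ} (hs : 0 < s) (hρ : 0 < ρ) :
    IntegrableOn (fun z : E => ‖z‖ ^ (-(Module.finrank ℝ E + s))) (ball 0 ρ)ᶜ μ := by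
  rcases subsingleton_or_nontrivial E with hE | hE
  · simp [compl_ball_zero_eq_empty hρ]
  rw [← integrable_indicator_iff measurableSet_ball.compl,
    indicator_compl_ball_zero_comp_norm ρ (· ^ _), integrable_fun_norm_addHaar μ]
  refine IntegrableOn.congr_fun ?_ (fun y hy => (pow_smul_indicator_Ici_rpow
    Module.finrank_pos s ρ hy).symm) measurableSet_Ioi
  refine (integrable_indicator_iff measurableSet_Ici).2 ?_ |>.integrableOn
  exact (integrableOn_Ici_iff_integrableOn_Ioi).2 (integrableOn_Ioi_rpow_of_lt (by linarith) hρ)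

lemma setIntegral_compl_ball_norm_rpow_neg {s ρ : ℝ} (hs : 0 < s) (hρ : 0 < ρ) :
    ∫ z in (ball (0 : E) ρ)ᶜ, ‖z‖ ^ (-(Module.finrank ℝ E + s)) ∂μ =
      Module.finrank ℝ E * μ.real (ball 0 1) * ρ ^ (-s) / s := by
  rcases subsingleton_or_nontrivial E with hE | hE
  · simp [Module.finrank_zero_of_subsingleton, compl_ball_zero_eq_empty hρ]
  rw [← integral_indicator measurableSet_ball.compl,
    indicator_compl_ball_zero_comp_norm ρ (· ^ _), integral_fun_norm_addHaar μ,
    setIntegral_congr_fun measurableSet_Ioi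
      (fun y hy => pow_smul_indicator_Ici_rpow Module.finrank_pos s ρ hy),
    setIntegral_indicator measurableSet_Ici,
    inter_eq_self_of_subset_right (Ici_subset_Ioi.2 hρ), integral_Ici_eq_integral_Ioi,
    integral_Ioi_rpow_of_lt (by linarith) hρ]
  simp only [nsmul_eq_mul, smul_eq_mul, sub_add_cancel]
  field_simp

variable {μ}

lemma setIntegral_compl_ball_norm_sub_rpow_neg_le {s ρ : ℝ} (hs : 0 < s) {x : E}
    (hx : ‖x‖ < ρ) :
    ∫ y in (ball 0 ρ)ᶜ, ‖y - x‖ ^ (-(Module.finrank ℝ E + s)) ∂μ ≤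
      Module.finrank ℝ E * μ.real (ball 0 1) * (ρ - ‖x‖) ^ (-s) / s := by
  have hsub : ball (0 : E) (ρ - ‖x‖) ⊆ ball (-x) ρ := ball_subset_ball' (by simp)
  rw [setIntegral_compl_ball_zero_norm_sub μ (· ^ _),
    ← setIntegral_compl_ball_norm_rpow_neg μ hs (sub_pos.2 hx)]
  exact setIntegral_mono_set (integrableOn_compl_ball_norm_rpow_neg μ hs (sub_pos.2 hx))
    (.of_forall fun z => by positivity) (compl_subset_compl.2 hsub).eventuallyLE

lemma le_setIntegral_compl_ball_norm_sub_rpow_neg {s ρ : ℝ} (hs : 0 < s) {x : E}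
    (hx : ‖x‖ < ρ) :
    Module.finrank ℝ E * μ.real (ball 0 1) * (ρ + ‖x‖) ^ (-s) / s ≤
      ∫ y in (ball 0 ρ)ᶜ, ‖y - x‖ ^ (-(Module.finrank ℝ E + s)) ∂μ := by
  have hsub : ball (0 : E) (ρ - ‖x‖) ⊆ ball (-x) ρ := ball_subset_ball' (by simp)
  have hsub' : ball (-x) ρ ⊆ ball (0 : E) (ρ + ‖x‖) := ball_subset_ball' (by simp)
  have hρ : 0 < ρ := (norm_nonneg x).trans_lt hx
  rw [setIntegral_compl_ball_zero_norm_sub μ (· ^ _),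
    ← setIntegral_compl_ball_norm_rpow_neg μ hs (by positivity)]
  exact setIntegral_mono_set
    ((integrableOn_compl_ball_norm_rpow_neg μ hs (sub_pos.2 hx)).mono_set
      (compl_subset_compl.2 hsub))
    (.of_forall fun z => by positivity) (compl_subset_compl.2 hsub').eventuallyLE

lemma tendsto_rpow_mul_setIntegral_compl_ball_norm_sub_rpow_neg {α : Type*} {l : Filter α}
    {R : α → ℝ} (hR : Tendsto R l atTop) {c s : ℝ} (hc : 0 < c) (hs : 0 < s) (x : E) :
    Tendsto (fun i => R i ^ s *
        ∫ y in (ball 0 (c * R i))ᶜ, ‖y - x‖ ^ (-(Module.finrank ℝ E + s)) ∂μ) l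
      (nhds (Module.finrank ℝ E * μ.real (ball 0 1) * c ^ (-s) / s)) := by
  set A : ℝ := Module.finrank ℝ E * μ.real (ball 0 1)
  have hlim (a : ℝ) : Tendsto (fun i => R i ^ s * (A * (c * R i + a) ^ (-s) / s)) l
      (nhds (A * c ^ (-s) / s)) := by
    rw [show A * c ^ (-s) / s = A / s * c ^ (-s) by ring]
    exact ((tendsto_rpow_mul_mul_add_rpow_neg hR hc a s).const_mul (A / s)).congr fun i => by ring
  have hfar : ∀ᶠ i in l, 0 ≤ R i ∧ ‖x‖ < c * R i := by
    filter_upwards [hR.eventually_ge_atTop 0, hR.eventually_gt_atTop (‖x‖ / c)] with i h0 hx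
    exact ⟨h0, (div_lt_iff₀' hc).1 hx⟩
  refine tendsto_of_tendsto_of_tendsto_of_le_of_le' (hlim ‖x‖) (hlim (-‖x‖)) ?_ ?_
  · filter_upwards [hfar] with i ⟨h0, hx⟩
    gcongr
    exact le_setIntegral_compl_ball_norm_sub_rpow_neg hs hx
  · filter_upwards [hfar] with i ⟨h0, hx⟩
    gcongr
    rw [← sub_eq_add_neg]
    exact setIntegral_compl_ball_norm_sub_rpow_neg_le hs hx

end RadialTail

lemma hasFracLap_of_eq_ite_norm_lt {n : ℕ} {σ ρ a b : ℝ} {u : EuclideanSpace ℝ (Fin n) → ℝ}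
    (hu : ∀ y, u y = if ‖y‖ < ρ then a else b) {x : EuclideanSpace ℝ (Fin n)} (hx : ‖x‖ < ρ) :
    HasFracLap n σ u x
      (fracLapConst n σ * ((a - b) * ∫ y in (ball 0 ρ)ᶜ, ‖y - x‖ ^ (-((n : ℝ) + 2 * σ)))) := by
  refine tendsto_const_nhds.congr' ?_
  filter_upwards [Ioo_mem_nhdsGT (sub_pos.2 hx)] with ε ⟨hε0, hε⟩
  have hfar : (ball 0 ρ)ᶜ ⊆ {y | ε < dist x y} := fun y hy => by
    rw [mem_compl_iff, mem_ball_zero_iff, not_lt] at hy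
    have := norm_sub_norm_le y x
    rw [mem_ofPred_eq, dist_comm, dist_eq_norm]
    linarith
  have hmeas : MeasurableSet {y | ε < dist x y} :=
    (isOpen_lt continuous_const (continuous_const.dist continuous_id)).measurableSet
  rw [setIntegral_eq_of_subset_of_forall_sdiff_eq_zero hmeas hfar
      fun y hy => by rw [hu, hu, if_pos hx, if_pos (by simpa using hy.2), sub_self, zero_div],
    ← integral_const_mul]
  refine congrArg _ (setIntegral_congr_fun measurableSet_ball.compl fun y hy => ?_).symm
  rw [mem_compl_iff, mem_ball_zero_iff] at hy
  rw [hu, hu, if_pos hx, if_neg hy, dist_comm, dist_eq_norm, Real.rpow_neg (norm_nonneg _),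
    div_eq_mul_inv]

theorem fracLap_of_step_sequence_general (n : ℕ) (σ : ℝ) (hσ : σ ∈ Set.Ioo (0 : ℝ) 1)
    (V : ℕ → EuclideanSpace ℝ (Fin n) → ℝ)
    (hV : ∀ (j : ℕ) (y : EuclideanSpace ℝ (Fin n)),
      V j y = if ‖y‖ < 3 * (j : ℝ) ^ (1 / (2 * σ)) then 1 else 1 + j) :
    (∀ K : Set (EuclideanSpace ℝ (Fin n)), IsCompact K → ∀ m : ℕ, m ≤ 2 →
      TendstoUniformlyOn (fun j => iteratedFDeriv ℝ m (V j))
        (iteratedFDeriv ℝ m (fun _ => (1 : ℝ))) Filter.atTop K) ∧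
    (∀ x : EuclideanSpace ℝ (Fin n), ∃ g : ℕ → ℝ,
      (∀ j : ℕ, 1 ≤ j → ‖x‖ < 3 * (j : ℝ) ^ (1 / (2 * σ)) →
        HasFracLap n σ (V j) x (g j)) ∧
      Filter.Tendsto g Filter.atTop
        (nhds (-(fracLapConst n σ) * sphereSurface n / (2 * σ * 3 ^ (2 * σ))))) := by
  have hσ0 : 0 < σ := hσ.1
  set R : ℕ → ℝ := fun j => (j : ℝ) ^ (1 / (2 * σ))
  have hR : Tendsto R atTop atTop :=
    (tendsto_rpow_atTop (by positivity)).comp tendsto_natCast_atTop_atTop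
  have hV' (j : ℕ) (y) : V j y = if ‖y‖ < 3 * R j then 1 else 1 + (j : ℝ) := by
    rw [hV]
    push_cast
    rfl
  refine ⟨fun K hK m _ => ?_, fun x => ⟨_, fun j _ hx => hasFracLap_of_eq_ite_norm_lt (hV' j) hx, ?_⟩⟩
  · obtain ⟨r, hKr⟩ := hK.isBounded.subset_ball 0
    refine tendstoUniformlyOn_iteratedFDeriv_of_eventually_eqOn isOpen_ball hKr ?_ m
    filter_upwards [hR.eventually_ge_atTop (r / 3)] with j hj y hy
    rw [hV', if_pos (by rw [mem_ball_zero_iff] at hy; linarith)]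
  · have hj (j : ℕ) : (j : ℝ) = R j ^ (2 * σ) := by
      rw [show R j = (j : ℝ) ^ (2 * σ)⁻¹ by simp [R], Real.rpow_inv_rpow (Nat.cast_nonneg j)
        (by positivity)]
    have hlim := tendsto_rpow_mul_setIntegral_compl_ball_norm_sub_rpow_neg (μ := volume) hR
      three_pos (by positivity : 0 < 2 * σ) x
    rw [finrank_euclideanSpace_fin] at hlim
    convert hlim.const_mul (-fracLapConst n σ) using 1
    · ext j
      rw [← hj]
      ring
    · rw [sphereSurface, Real.rpow_neg (by norm_num), ← measureReal_def]
      congr 1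
      ring

theorem fracLap_of_step_sequence (n : ℕ) (hn : 1 ≤ n) (σ : ℝ) (hσ : σ ∈ Set.Ioo (0 : ℝ) 1)
    (V : ℕ → EuclideanSpace ℝ (Fin n) → ℝ)
    (hV : ∀ (j : ℕ) (y : EuclideanSpace ℝ (Fin n)),
      V j y = if ‖y‖ < 3 * (j : ℝ) ^ (1 / (2 * σ)) then 1 else 1 + j) :
    (∀ K : Set (EuclideanSpace ℝ (Fin n)), IsCompact K → ∀ m : ℕ, m ≤ 2 →
      TendstoUniformlyOn (fun j => iteratedFDeriv ℝ m (V j))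
        (iteratedFDeriv ℝ m (fun _ => (1 : ℝ))) Filter.atTop K) ∧
    (∀ x : EuclideanSpace ℝ (Fin n), ∃ g : ℕ → ℝ,
      (∀ j : ℕ, 1 ≤ j → ‖x‖ < 3 * (j : ℝ) ^ (1 / (2 * σ)) →
        HasFracLap n σ (V j) x (g j)) ∧
      Filter.Tendsto g Filter.atTop
        (nhds (-(fracLapConst n σ) * sphereSurface n / (2 * σ * 3 ^ (2 * σ))))) :=
  fracLap_of_step_sequence_general n σ hσ V hV
end
end
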